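/- arXiv:1907.00884 — 2 statements merged into one kernel-verified Lean document; each statement's English description precedes it below -/
import Mathlib

section
/- The oracle feasible set is contained in the round-trip feasible set: A_o(s,g,𝕃) ⊆ A_rt(s,g,𝕃). -/
theorem oracle_bound_le_rt_bound {S : Type*} {h : S → S → ℝ}
    (h_tri : ∀ x y z, h x z ≤ h x y + h y z) (s : S) {g ℓ : S} {η : ℝ}
    (hw : h g ℓ + h ℓ g ≤ η) :
    h g ℓ + h s g ≤ h s ℓ + η := by
  linarith [h_tri s ℓ g]

theorem oracle_subset_rt_feasible_general {S A : Type*} (𝕃 : Finset S)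
    (h : S → S → ℝ) (q : S → S → A → ℝ)
    (h_tri : ∀ x y z, h x z ≤ h x y + h y z)
    (s g : S) (η : ℝ) :
    {a : A | ∀ ℓ ∈ 𝕃, q ℓ s a ≤ h g ℓ + h s g} ⊆
      {a : A | ∀ ℓ ∈ 𝕃, h g ℓ + h ℓ g ≤ η → q ℓ s a ≤ h s ℓ + η} :=
  fun _ ha ℓ hℓ hw => (ha ℓ hℓ).trans (oracle_bound_le_rt_bound h_tri s hw)

/-- The oracle feasible set is contained in the round-trip feasible set. -/
theorem oracle_subset_rt_feasible {S A : Type*} (𝕃 : Finset S)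
    (h : S → S → ℝ) (q : S → S → A → ℝ)
    (h_nonneg : ∀ x y, 0 ≤ h x y)
    (h_refl : ∀ x, h x x = 0)
    (h_tri : ∀ x y z, h x z ≤ h x y + h y z)
    (s g : S) (η : ℝ) (hη : 0 < η)
    (hW : ∃ ℓ ∈ 𝕃, h g ℓ + h ℓ g ≤ η) :
    {a : A | ∀ ℓ ∈ 𝕃, q ℓ s a ≤ h g ℓ + h s g} ⊆
      {a : A | ∀ ℓ ∈ 𝕃, h g ℓ + h ℓ g ≤ η → q ℓ s a ≤ h s ℓ + η} :=
  oracle_subset_rt_feasible_general 𝕃 h q h_tri s g η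
end

section
/- Action pruning preserves optimality: for any state s and goal g, the feasible set A_rt(s,g,𝕃) contains every action a that is the first action of some optimal policy from s to g; hence restricting exploration to A_rt never excludes all optimal actions. -/
lemma detour_le_add_of_roundTrip_le {S : Type*} (h : S → S → ℝ)
    (h_tri : ∀ x y z, h x z ≤ h x y + h y z) {s g ℓ : S} {η : ℝ}
    (hrt : h g ℓ + h ℓ g ≤ η) :
    h s g + h g ℓ ≤ h s ℓ + η := by
  linarith [h_tri s ℓ g]

theorem pruning_preserves_optimality_general {S A : Type*} (𝕃 : Finset S)
    (h : S → S → ℝ) (q : S → S → A → ℝ)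
    (h_tri : ∀ x y z, h x z ≤ h x y + h y z)
    (s g : S) (η : ℝ)
    (a : A)
    (h_opt : ∀ ℓ ∈ 𝕃, q ℓ s a ≤ h s g + h g ℓ) :
    a ∈ {a : A | ∀ ℓ ∈ 𝕃, h g ℓ + h ℓ g ≤ η → q ℓ s a ≤ h s ℓ + η} :=
  fun ℓ hℓ hrt => (h_opt ℓ hℓ).trans (detour_le_add_of_roundTrip_le h h_tri hrt)

/-- Action pruning preserves optimality: every optimal first action lies in the
round-trip feasible set `A_rt(s,g,𝕃)`. -/
theorem pruning_preserves_optimality {S A : Type*} (𝕃 : Finset S)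
    (h : S → S → ℝ) (q : S → S → A → ℝ)
    (h_nonneg : ∀ x y, 0 ≤ h x y)
    (h_refl : ∀ x, h x x = 0)
    (h_tri : ∀ x y z, h x z ≤ h x y + h y z)
    (s g : S) (η : ℝ) (hη : 0 < η)
    (hW : ∃ ℓ ∈ 𝕃, h g ℓ + h ℓ g ≤ η)
    (a : A)
    (h_opt : ∀ ℓ ∈ 𝕃, q ℓ s a ≤ h s g + h g ℓ) :
    a ∈ {a : A | ∀ ℓ ∈ 𝕃, h g ℓ + h ℓ g ≤ η → q ℓ s a ≤ h s ℓ + η} :=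
  pruning_preserves_optimality_general 𝕃 h q h_tri s g η a h_opt
end
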